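/- arXiv:2109.09591 — 8 statements merged into one kernel-verified Lean document; each statement's English description precedes it below -/
import Mathlib

section
/- In a Heyting algebra, if for all elements a, b we have (a ⇨ b) ⊔ (b ⇨ a) = ⊤ (the prelinearity/linearity law), then for all γ, δ₁, δ₂ we have (γ ⇨ (δ₁ ⊔ δ₂)) ≤ (γ ⇨ δ₁) ⊔ (γ ⇨ δ₂). -/
/-! Prelinearity splits `γ ⇨ δ₁ ⊔ δ₂` into its meets with `δ₁ ⇨ δ₂` and with `δ₂ ⇨ δ₁`; through the
first, `γ` reaches `δ₁ ⊔ δ₂` and from there `δ₂`, so that meet lies below `γ ⇨ δ₂`, and symmetrically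
the second lies below `γ ⇨ δ₁`. -/

theorem himp_sup_inf_himp_le {α : Type*} [HeytingAlgebra α] (a b c : α) :
    (a ⇨ b ⊔ c) ⊓ (b ⇨ c) ≤ a ⇨ c := by
  simpa only [sup_himp_self_right] using himp_triangle a (b ⊔ c) c

/-- In a Heyting algebra satisfying prelinearity `(a ⇨ b) ⊔ (b ⇨ a) = ⊤`,
we have `(γ ⇨ (δ₁ ⊔ δ₂)) ≤ (γ ⇨ δ₁) ⊔ (γ ⇨ δ₂)`. -/
theorem prelinear_himp_sup_le {H : Type*} [HeytingAlgebra H]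
    (hpre : ∀ a b : H, (a ⇨ b) ⊔ (b ⇨ a) = ⊤) (γ δ₁ δ₂ : H) :
    (γ ⇨ (δ₁ ⊔ δ₂)) ≤ (γ ⇨ δ₁) ⊔ (γ ⇨ δ₂) := by
  have h₁₂ := himp_sup_inf_himp_le γ δ₁ δ₂
  have h₂₁ := himp_sup_inf_himp_le γ δ₂ δ₁
  rw [sup_comm δ₂ δ₁] at h₂₁
  calc γ ⇨ δ₁ ⊔ δ₂ = (γ ⇨ δ₁ ⊔ δ₂) ⊓ ((δ₁ ⇨ δ₂) ⊔ (δ₂ ⇨ δ₁)) := by rw [hpre, inf_top_eq]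
    _ = (γ ⇨ δ₁ ⊔ δ₂) ⊓ (δ₁ ⇨ δ₂) ⊔ (γ ⇨ δ₁ ⊔ δ₂) ⊓ (δ₂ ⇨ δ₁) := inf_sup_left _ _ _
    _ ≤ (γ ⇨ δ₁) ⊔ (γ ⇨ δ₂) := sup_le (le_sup_of_le_right h₁₂) (le_sup_of_le_left h₂₁)
end

section
/- In a Heyting algebra, if for all γ, δ₁, δ₂ we have (γ ⇨ (δ₁ ⊔ δ₂)) ≤ (γ ⇨ δ₁) ⊔ (γ ⇨ δ₂), then for all a, b we have (a ⇨ b) ⊔ (b ⇨ a) = ⊤. -/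
/-- In a Heyting algebra, if `(γ ⇨ (δ₁ ⊔ δ₂)) ≤ (γ ⇨ δ₁) ⊔ (γ ⇨ δ₂)` always
holds, then prelinearity `(a ⇨ b) ⊔ (b ⇨ a) = ⊤` holds. -/
theorem himp_sup_le_prelinear {H : Type*} [HeytingAlgebra H]
    (h : ∀ γ δ₁ δ₂ : H, (γ ⇨ (δ₁ ⊔ δ₂)) ≤ (γ ⇨ δ₁) ⊔ (γ ⇨ δ₂)) (a b : H) :
    (a ⇨ b) ⊔ (b ⇨ a) = ⊤ := by
  refine top_le_iff.mp ?_
  calc ⊤ = (a ⊔ b ⇨ a ⊔ b) := himp_self.symm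
    _ ≤ (a ⊔ b ⇨ a) ⊔ (a ⊔ b ⇨ b) := h (a ⊔ b) a b
    _ ≤ (b ⇨ a) ⊔ (a ⇨ b) :=
        sup_le_sup (himp_le_himp_right le_sup_right) (himp_le_himp_right le_sup_left)
    _ = (a ⇨ b) ⊔ (b ⇨ a) := sup_comm _ _
end

section
/- In a Heyting algebra satisfying prelinearity ((a ⇨ b) ⊔ (b ⇨ a) = ⊤ for all a, b), for all γ₁, γ₂, δ we have ((γ₁ ⊓ γ₂) ⇨ δ) ≤ (γ₁ ⇨ δ) ⊔ (γ₂ ⇨ δ). -/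
/-! Prelinearity covers `⊤` by `γ₁ ⇨ γ₂` and `γ₂ ⇨ γ₁`. Where `γ₁ ⇨ γ₂` holds, `γ₁ ⊓ γ₂` may be
replaced by `γ₁` in the antecedent, giving `γ₁ ⇨ δ`; symmetrically on the other piece. -/

theorem inf_himp_inf_himp_le_himp {H : Type*} [HeytingAlgebra H] (a b c : H) :
    (a ⊓ b ⇨ c) ⊓ (a ⇨ b) ≤ a ⇨ c :=
  calc (a ⊓ b ⇨ c) ⊓ (a ⇨ b) = a ⇨ (b ⇨ c) ⊓ b := by rw [← himp_himp, himp_inf_distrib]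
    _ ≤ a ⇨ c := himp_le_himp_left himp_inf_le

/-- In a Heyting algebra satisfying prelinearity, the generalised De Morgan
law `((γ₁ ⊓ γ₂) ⇨ δ) ≤ (γ₁ ⇨ δ) ⊔ (γ₂ ⇨ δ)` holds. -/
theorem prelinear_inf_himp_le {H : Type*} [HeytingAlgebra H]
    (hpre : ∀ a b : H, (a ⇨ b) ⊔ (b ⇨ a) = ⊤) (γ₁ γ₂ δ : H) :
    ((γ₁ ⊓ γ₂) ⇨ δ) ≤ (γ₁ ⇨ δ) ⊔ (γ₂ ⇨ δ) :=
  calc ((γ₁ ⊓ γ₂) ⇨ δ)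
      = ((γ₁ ⊓ γ₂) ⇨ δ) ⊓ ((γ₁ ⇨ γ₂) ⊔ (γ₂ ⇨ γ₁)) := by rw [hpre, inf_top_eq]
    _ = ((γ₁ ⊓ γ₂) ⇨ δ) ⊓ (γ₁ ⇨ γ₂) ⊔ ((γ₁ ⊓ γ₂) ⇨ δ) ⊓ (γ₂ ⇨ γ₁) := inf_sup_left _ _ _
    _ ≤ (γ₁ ⇨ δ) ⊔ (γ₂ ⇨ δ) :=
      sup_le_sup (inf_himp_inf_himp_le_himp γ₁ γ₂ δ)
        (inf_comm γ₁ γ₂ ▸ inf_himp_inf_himp_le_himp γ₂ γ₁ δ)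
end

section
/- In a Heyting algebra, if for all γ₁, γ₂, δ we have ((γ₁ ⊓ γ₂) ⇨ δ) ≤ (γ₁ ⇨ δ) ⊔ (γ₂ ⇨ δ), then for all a, b we have (a ⇨ b) ⊔ (b ⇨ a) = ⊤. -/
/-- In a Heyting algebra, the generalised De Morgan law
`((γ₁ ⊓ γ₂) ⇨ δ) ≤ (γ₁ ⇨ δ) ⊔ (γ₂ ⇨ δ)` implies prelinearity. -/
theorem inf_himp_le_prelinear {H : Type*} [HeytingAlgebra H]
    (h : ∀ γ₁ γ₂ δ : H, ((γ₁ ⊓ γ₂) ⇨ δ) ≤ (γ₁ ⇨ δ) ⊔ (γ₂ ⇨ δ)) (a b : H) :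
    (a ⇨ b) ⊔ (b ⇨ a) = ⊤ := by
  refine top_le_iff.mp ?_
  calc ⊤ = a ⊓ b ⇨ a ⊓ b := himp_self.symm
    _ ≤ (a ⇨ a ⊓ b) ⊔ (b ⇨ a ⊓ b) := h a b (a ⊓ b)
    _ ≤ (a ⇨ b) ⊔ (b ⇨ a) :=
      sup_le_sup (himp_le_himp_left inf_le_right) (himp_le_himp_left inf_le_left)
end

section
/- Define a natural-deduction-style (or Hilbert-style) provability predicate for intuitionistic propositional logic extended with the linearity axiom scheme LIN: (φ → ψ) ∨ (ψ → φ). Then for all formulas γ₁, γ₂, δ, the generalised De Morgan formula ((γ₁ ∧ γ₂) → δ) → ((γ₁ → δ) ∨ (γ₂ → δ)) is provable in this system. -/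
/-!
Argue by cases on the LIN instance `(γ₁ → γ₂) ∨ (γ₂ → γ₁)`. If `γ₁ → γ₂`, then `γ₁` already
yields `γ₁ ∧ γ₂`, so `(γ₁ ∧ γ₂) → δ` gives `γ₁ → δ`; symmetrically, `γ₂ → γ₁` turns it into
`γ₂ → δ`. Both case derivations are carried out under hypotheses and discharged by the
deduction theorem.
-/

/-- Propositional formulas over countably many atoms with `→`, `∧`, `∨`, `⊥`. -/
inductive PForm : Type
  | atom : ℕ → PForm
  | bot : PForm
  | imp : PForm → PForm → PForm
  | and : PForm → PForm → PForm
  | or : PForm → PForm → PForm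

open PForm

/-- Hilbert-style provability for intuitionistic propositional logic,
extended by an arbitrary set `Ax` of extra axioms, with modus ponens as the
only inference rule. -/
inductive HilbertProv (Ax : PForm → Prop) : PForm → Prop
  | extra {φ} : Ax φ → HilbertProv Ax φ
  | k (φ ψ) : HilbertProv Ax (imp φ (imp ψ φ))
  | s (φ ψ χ) : HilbertProv Ax
      (imp (imp φ (imp ψ χ)) (imp (imp φ ψ) (imp φ χ)))
  | andIntro (φ ψ) : HilbertProv Ax (imp φ (imp ψ (and φ ψ)))
  | andElimL (φ ψ) : HilbertProv Ax (imp (and φ ψ) φ)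
  | andElimR (φ ψ) : HilbertProv Ax (imp (and φ ψ) ψ)
  | orIntroL (φ ψ) : HilbertProv Ax (imp φ (or φ ψ))
  | orIntroR (φ ψ) : HilbertProv Ax (imp ψ (or φ ψ))
  | orElim (φ ψ χ) : HilbertProv Ax
      (imp (imp φ χ) (imp (imp ψ χ) (imp (or φ ψ) χ)))
  | exFalso (φ) : HilbertProv Ax (imp bot φ)
  | mp {φ ψ} : HilbertProv Ax (imp φ ψ) → HilbertProv Ax φ → HilbertProv Ax ψ

/-- The linearity axiom scheme LIN: all formulas of the form
`(φ → ψ) ∨ (ψ → φ)`. -/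
def LINScheme : PForm → Prop :=
  fun f => ∃ φ ψ : PForm, f = or (imp φ ψ) (imp ψ φ)

def genDeMorgan (γ₁ γ₂ δ : PForm) : PForm :=
  imp (imp (and γ₁ γ₂) δ) (or (imp γ₁ δ) (imp γ₂ δ))

namespace HilbertProv

variable {Ax : PForm → Prop}

theorem imp_self (φ : PForm) : HilbertProv Ax (imp φ φ) :=
  .mp (.mp (.s φ (imp φ φ) φ) (.k φ (imp φ φ))) (.k φ φ)

theorem imp_trans {a b c : PForm} (hab : HilbertProv Ax (imp a b))
    (hbc : HilbertProv Ax (imp b c)) : HilbertProv Ax (imp a c) :=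
  .mp (.mp (.s a b c) (.mp (.k (imp b c) a) hbc)) hab

theorem deduction {ψ φ : PForm} (h : HilbertProv (fun f => Ax f ∨ f = ψ) φ) :
    HilbertProv Ax (imp ψ φ) := by
  induction h with
  | @extra χ h =>
    rcases h with h | rfl
    · exact .mp (.k χ ψ) (.extra h)
    · exact imp_self χ
  | k a b => exact .mp (.k _ ψ) (.k a b)
  | s a b c => exact .mp (.k _ ψ) (.s a b c)
  | andIntro a b => exact .mp (.k _ ψ) (.andIntro a b)
  | andElimL a b => exact .mp (.k _ ψ) (.andElimL a b)
  | andElimR a b => exact .mp (.k _ ψ) (.andElimR a b)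
  | orIntroL a b => exact .mp (.k _ ψ) (.orIntroL a b)
  | orIntroR a b => exact .mp (.k _ ψ) (.orIntroR a b)
  | orElim a b c => exact .mp (.k _ ψ) (.orElim a b c)
  | exFalso a => exact .mp (.k _ ψ) (.exFalso a)
  | mp _ _ ih₁ ih₂ => exact .mp (.mp (.s _ _ _) ih₁) ih₂

theorem deduction₂ {ψ₁ ψ₂ φ : PForm}
    (h : HilbertProv (fun f => (Ax f ∨ f = ψ₁) ∨ f = ψ₂) φ) :
    HilbertProv Ax (imp ψ₁ (imp ψ₂ φ)) :=
  deduction (deduction h)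

theorem imp_and_of_imp_left {a b : PForm} (h : HilbertProv Ax (imp a b)) :
    HilbertProv Ax (imp a (and a b)) :=
  .mp (.mp (.s a b (and a b)) (.andIntro a b)) h

theorem imp_and_of_imp_right {a b : PForm} (h : HilbertProv Ax (imp b a)) :
    HilbertProv Ax (imp b (and a b)) :=
  .mp (.mp (.s b b (and a b)) (imp_trans h (.andIntro a b))) (imp_self b)

theorem imp_genDeMorgan_of_imp_left (γ₁ γ₂ δ : PForm) :
    HilbertProv Ax (imp (imp γ₁ γ₂) (genDeMorgan γ₁ γ₂ δ)) := by
  unfold genDeMorgan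
  exact deduction₂ <| .mp (.orIntroL _ _) <|
    imp_trans (imp_and_of_imp_left (.extra (.inl (.inr rfl)))) (.extra (.inr rfl))

theorem imp_genDeMorgan_of_imp_right (γ₁ γ₂ δ : PForm) :
    HilbertProv Ax (imp (imp γ₂ γ₁) (genDeMorgan γ₁ γ₂ δ)) := by
  unfold genDeMorgan
  exact deduction₂ <| .mp (.orIntroR _ _) <|
    imp_trans (imp_and_of_imp_right (.extra (.inl (.inr rfl)))) (.extra (.inr rfl))

end HilbertProv

/-- In intuitionistic propositional logic extended with the linearity axiom
scheme LIN, every instance of the generalised De Morgan scheme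
`((γ₁ ∧ γ₂) → δ) → ((γ₁ → δ) ∨ (γ₂ → δ))` is provable. -/
theorem lin_proves_gdm (γ₁ γ₂ δ : PForm) :
    HilbertProv LINScheme
      (PForm.imp (PForm.imp (PForm.and γ₁ γ₂) δ)
        (PForm.or (PForm.imp γ₁ δ) (PForm.imp γ₂ δ))) :=
  have lin : HilbertProv LINScheme (or (imp γ₁ γ₂) (imp γ₂ γ₁)) := .extra ⟨γ₁, γ₂, rfl⟩
  .mp (.mp (.mp (.orElim _ _ _) (.imp_genDeMorgan_of_imp_left γ₁ γ₂ δ))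
    (.imp_genDeMorgan_of_imp_right γ₁ γ₂ δ)) lin
end

section
/- Define hypersequents as finite lists of sequents (pairs of finite lists of propositional formulas with single-conclusion succedent), and a derivability predicate HLJ generated by the axioms (Id), (Bot), the external structural rules (ew), (ec), (ee), internal structural rules, cut, and the standard logical rules. Then HLJ has the component soundness property with respect to Heyting algebra semantics: if HLJ derives the hypersequent Γ₁ ⇒ φ₁ | ⋯ | Γₙ ⇒ φₙ, then for every Heyting-algebra valuation v, ⊤ ≤ ⨆ᵢ (⟦⋀Γᵢ⟧ᵥ ⇨ ⟦φᵢ⟧ᵥ). -/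
/-- A single-conclusion sequent `Γ ⇒ φ`: a finite list of formulas together
with one succedent formula. -/
abbrev Sequent : Type := List PForm × PForm

/-- A hypersequent: a finite list of single-conclusion sequents. -/
abbrev Hypersequent : Type := List Sequent

/-- The intuitionistic single-conclusion hypersequent calculus HLJ:
axioms (Id), (Bot); external weakening, contraction, exchange; internal
(antecedent) weakening, contraction, exchange; cut; and the standard logical
rules for `∧`, `∨`, `→`. -/
inductive HLJ : Hypersequent → Prop
  | id (φ : PForm) : HLJ [([φ], φ)]
  | bot (φ : PForm) : HLJ [([PForm.bot], φ)]
  | ew (S : Sequent) {G} : HLJ G → HLJ (S :: G)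
  | ec {S : Sequent} {G} : HLJ (S :: S :: G) → HLJ (S :: G)
  | ee {S T : Sequent} (G : Hypersequent) {H} :
      HLJ (G ++ S :: T :: H) → HLJ (G ++ T :: S :: H)
  | iwL (φ : PForm) {Γ δ G} : HLJ ((Γ, δ) :: G) → HLJ ((φ :: Γ, δ) :: G)
  | icL {φ : PForm} {Γ δ G} :
      HLJ ((φ :: φ :: Γ, δ) :: G) → HLJ ((φ :: Γ, δ) :: G)
  | ieL {φ ψ : PForm} (Γ₁ : List PForm) {Γ₂ δ G} :
      HLJ ((Γ₁ ++ φ :: ψ :: Γ₂, δ) :: G) → HLJ ((Γ₁ ++ ψ :: φ :: Γ₂, δ) :: G)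
  | cut {Γ₀ Γ₁ : List PForm} {δ χ : PForm} {G} :
      HLJ ((Γ₀, δ) :: G) → HLJ ((δ :: Γ₁, χ) :: G) →
      HLJ ((Γ₀ ++ Γ₁, χ) :: G)
  | andL₁ {φ₁ : PForm} (φ₂ : PForm) {Γ δ G} :
      HLJ ((φ₁ :: Γ, δ) :: G) → HLJ ((PForm.and φ₁ φ₂ :: Γ, δ) :: G)
  | andL₂ (φ₁ : PForm) {φ₂ : PForm} {Γ δ G} :
      HLJ ((φ₂ :: Γ, δ) :: G) → HLJ ((PForm.and φ₁ φ₂ :: Γ, δ) :: G)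
  | andR {Γ} {φ ψ : PForm} {G} :
      HLJ ((Γ, φ) :: G) → HLJ ((Γ, ψ) :: G) → HLJ ((Γ, PForm.and φ ψ) :: G)
  | orL {φ ψ : PForm} {Γ δ G} :
      HLJ ((φ :: Γ, δ) :: G) → HLJ ((ψ :: Γ, δ) :: G) →
      HLJ ((PForm.or φ ψ :: Γ, δ) :: G)
  | orR₁ {Γ} {φ : PForm} (ψ : PForm) {G} :
      HLJ ((Γ, φ) :: G) → HLJ ((Γ, PForm.or φ ψ) :: G)
  | orR₂ (φ : PForm) {ψ : PForm} {Γ G} :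
      HLJ ((Γ, ψ) :: G) → HLJ ((Γ, PForm.or φ ψ) :: G)
  | impL {φ ψ : PForm} {Γ δ G} :
      HLJ ((Γ, φ) :: G) → HLJ ((ψ :: Γ, δ) :: G) →
      HLJ ((PForm.imp φ ψ :: Γ, δ) :: G)
  | impR {φ ψ : PForm} {Γ G} :
      HLJ ((φ :: Γ, ψ) :: G) → HLJ ((Γ, PForm.imp φ ψ) :: G)

/-- Interpretation of a formula in a Heyting algebra under a valuation of
the atoms. -/
def evalForm {H : Type*} [HeytingAlgebra H] (v : ℕ → H) : PForm → H
  | PForm.atom n => v n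
  | PForm.bot => ⊥
  | PForm.imp φ ψ => evalForm v φ ⇨ evalForm v ψ
  | PForm.and φ ψ => evalForm v φ ⊓ evalForm v ψ
  | PForm.or φ ψ => evalForm v φ ⊔ evalForm v ψ

/-- Interpretation of a sequent `Γ ⇒ φ`: `⟦⋀Γ⟧ ⇨ ⟦φ⟧`. -/
def evalSeq {H : Type*} [HeytingAlgebra H] (v : ℕ → H) (S : Sequent) : H :=
  (S.1.map (evalForm v)).foldr (· ⊓ ·) ⊤ ⇨ evalForm v S.2

/-- Interpretation of a hypersequent: the join of the interpretations of its
components. -/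
def evalHyp {H : Type*} [HeytingAlgebra H] (v : ℕ → H) (G : Hypersequent) : H :=
  (G.map (evalSeq v)).foldr (· ⊔ ·) ⊥

/-!
Soundness is proved by induction on derivations, and every rule of HLJ is sound componentwise.
For a one-premise rule the interpretation of the active component of the premise lies below
that of the conclusion; for a two-premise rule the meet of the two active components does.
Since the side hypersequent `G` is shared, `⊤ ≤ (a ⊔ g) ⊓ (b ⊔ g) = (a ⊓ b) ⊔ g` by
distributivity, so validity passes from the premises to the conclusion.
-/

section HeytingLemmas

variable {α : Type*} [GeneralizedHeytingAlgebra α]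

theorem himp_inf_inf_himp_le_inf_himp (a b c d : α) : (a ⇨ b) ⊓ (b ⊓ c ⇨ d) ≤ a ⊓ c ⇨ d := by
  rw [le_himp_iff]
  calc (a ⇨ b) ⊓ (b ⊓ c ⇨ d) ⊓ (a ⊓ c) = (b ⊓ c ⇨ d) ⊓ ((a ⇨ b) ⊓ a ⊓ c) := by ac_rfl
    _ ≤ (b ⊓ c ⇨ d) ⊓ (b ⊓ c) := by gcongr; exact himp_inf_le
    _ ≤ d := himp_inf_le

theorem himp_inf_inf_himp_le_himp_inf_himp (a b c d : α) :
    (a ⇨ b) ⊓ (c ⊓ a ⇨ d) ≤ (b ⇨ c) ⊓ a ⇨ d := by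
  rw [le_himp_iff]
  calc (a ⇨ b) ⊓ (c ⊓ a ⇨ d) ⊓ ((b ⇨ c) ⊓ a) = (c ⊓ a ⇨ d) ⊓ ((a ⇨ b) ⊓ (b ⇨ c) ⊓ a) := by
        ac_rfl
    _ ≤ (c ⊓ a ⇨ d) ⊓ (c ⊓ a) :=
        inf_le_inf_left _ <|
          le_inf ((inf_le_inf_right a (himp_triangle a b c)).trans himp_inf_le) inf_le_right
    _ ≤ d := himp_inf_le

end HeytingLemmas

section Semantics

variable {H : Type*} [HeytingAlgebra H] (v : ℕ → H)

def evalCtx (Γ : List PForm) : H := (Γ.map (evalForm v)).foldr (· ⊓ ·) ⊤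

theorem evalCtx_cons (φ : PForm) (Γ : List PForm) :
    evalCtx v (φ :: Γ) = evalForm v φ ⊓ evalCtx v Γ := rfl

theorem evalCtx_append (Γ Γ' : List PForm) :
    evalCtx v (Γ ++ Γ') = evalCtx v Γ ⊓ evalCtx v Γ' := by
  induction Γ with
  | nil => exact (top_inf_eq _).symm
  | cons φ Γ ih => rw [List.cons_append, evalCtx_cons, evalCtx_cons, ih, inf_assoc]

theorem evalSeq_mk (Γ : List PForm) (δ : PForm) :
    evalSeq v (Γ, δ) = evalCtx v Γ ⇨ evalForm v δ := rfl

theorem evalHyp_cons (S : Sequent) (G : Hypersequent) :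
    evalHyp v (S :: G) = evalSeq v S ⊔ evalHyp v G := rfl

theorem evalHyp_append (G G' : Hypersequent) :
    evalHyp v (G ++ G') = evalHyp v G ⊔ evalHyp v G' := by
  induction G with
  | nil => exact (bot_sup_eq _).symm
  | cons S G ih => rw [List.cons_append, evalHyp_cons, evalHyp_cons, ih, sup_assoc]

variable {v}

theorem top_le_evalHyp_cons_of_le {S T : Sequent} {G : Hypersequent}
    (h : evalSeq v S ≤ evalSeq v T) (hS : ⊤ ≤ evalHyp v (S :: G)) :
    ⊤ ≤ evalHyp v (T :: G) :=
  hS.trans (sup_le_sup_right h _)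

theorem top_le_evalHyp_cons_of_inf_le {S₁ S₂ T : Sequent} {G : Hypersequent}
    (h : evalSeq v S₁ ⊓ evalSeq v S₂ ≤ evalSeq v T)
    (h₁ : ⊤ ≤ evalHyp v (S₁ :: G)) (h₂ : ⊤ ≤ evalHyp v (S₂ :: G)) :
    ⊤ ≤ evalHyp v (T :: G) := by
  have h₁₂ : ⊤ ≤ (evalSeq v S₁ ⊓ evalSeq v S₂) ⊔ evalHyp v G := by
    rw [sup_inf_right]
    exact le_inf h₁ h₂
  exact h₁₂.trans (sup_le_sup_right h _)

variable (v)

theorem evalSeq_id (φ : PForm) : evalSeq v ([φ], φ) = ⊤ :=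
  himp_eq_top_iff.2 inf_le_left

theorem evalSeq_bot_cons (Γ : List PForm) (φ : PForm) : evalSeq v (.bot :: Γ, φ) = ⊤ := by
  rw [evalSeq_mk, evalCtx_cons, evalForm, bot_inf_eq, bot_himp]

theorem evalHyp_cons_cons (S : Sequent) (G : Hypersequent) :
    evalHyp v (S :: S :: G) = evalHyp v (S :: G) := by
  rw [evalHyp_cons, evalHyp_cons, sup_left_idem]

theorem evalHyp_swap (G : Hypersequent) (S T : Sequent) (G' : Hypersequent) :
    evalHyp v (G ++ S :: T :: G') = evalHyp v (G ++ T :: S :: G') := by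
  simp only [evalHyp_append, evalHyp_cons, sup_left_comm (evalSeq v S)]

theorem evalSeq_le_cons (φ : PForm) (Γ : List PForm) (δ : PForm) :
    evalSeq v (Γ, δ) ≤ evalSeq v (φ :: Γ, δ) :=
  himp_le_himp_right inf_le_right

theorem evalSeq_cons_cons (φ : PForm) (Γ : List PForm) (δ : PForm) :
    evalSeq v (φ :: φ :: Γ, δ) = evalSeq v (φ :: Γ, δ) := by
  rw [evalSeq_mk, evalSeq_mk, evalCtx_cons, evalCtx_cons, inf_left_idem]

theorem evalSeq_swap (Γ₁ : List PForm) (φ ψ : PForm) (Γ₂ : List PForm) (δ : PForm) :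
    evalSeq v (Γ₁ ++ φ :: ψ :: Γ₂, δ) = evalSeq v (Γ₁ ++ ψ :: φ :: Γ₂, δ) := by
  simp only [evalSeq_mk, evalCtx_append, evalCtx_cons, inf_left_comm (evalForm v φ)]

theorem evalSeq_inf_evalSeq_le_append (Γ₀ Γ₁ : List PForm) (δ χ : PForm) :
    evalSeq v (Γ₀, δ) ⊓ evalSeq v (δ :: Γ₁, χ) ≤ evalSeq v (Γ₀ ++ Γ₁, χ) := by
  rw [evalSeq_mk, evalSeq_mk, evalSeq_mk, evalCtx_cons, evalCtx_append]
  exact himp_inf_inf_himp_le_inf_himp _ _ _ _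

theorem evalSeq_le_and_cons_left (φ₁ φ₂ : PForm) (Γ : List PForm) (δ : PForm) :
    evalSeq v (φ₁ :: Γ, δ) ≤ evalSeq v (.and φ₁ φ₂ :: Γ, δ) :=
  himp_le_himp_right (inf_le_inf_right _ inf_le_left)

theorem evalSeq_le_and_cons_right (φ₁ φ₂ : PForm) (Γ : List PForm) (δ : PForm) :
    evalSeq v (φ₂ :: Γ, δ) ≤ evalSeq v (.and φ₁ φ₂ :: Γ, δ) :=
  himp_le_himp_right (inf_le_inf_right _ inf_le_right)

theorem evalSeq_and (Γ : List PForm) (φ ψ : PForm) :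
    evalSeq v (Γ, .and φ ψ) = evalSeq v (Γ, φ) ⊓ evalSeq v (Γ, ψ) :=
  himp_inf_distrib _ _ _

theorem evalSeq_or_cons (φ ψ : PForm) (Γ : List PForm) (δ : PForm) :
    evalSeq v (.or φ ψ :: Γ, δ) = evalSeq v (φ :: Γ, δ) ⊓ evalSeq v (ψ :: Γ, δ) := by
  rw [evalSeq_mk, evalCtx_cons, evalForm, inf_sup_right, sup_himp_distrib]
  rfl

theorem evalSeq_le_or_left (Γ : List PForm) (φ ψ : PForm) :
    evalSeq v (Γ, φ) ≤ evalSeq v (Γ, .or φ ψ) :=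
  himp_le_himp_left le_sup_left

theorem evalSeq_le_or_right (Γ : List PForm) (φ ψ : PForm) :
    evalSeq v (Γ, ψ) ≤ evalSeq v (Γ, .or φ ψ) :=
  himp_le_himp_left le_sup_right

theorem evalSeq_inf_evalSeq_le_imp_cons (Γ : List PForm) (φ ψ δ : PForm) :
    evalSeq v (Γ, φ) ⊓ evalSeq v (ψ :: Γ, δ) ≤ evalSeq v (.imp φ ψ :: Γ, δ) :=
  himp_inf_inf_himp_le_himp_inf_himp _ _ _ _

theorem evalSeq_imp (Γ : List PForm) (φ ψ : PForm) :
    evalSeq v (Γ, .imp φ ψ) = evalSeq v (φ :: Γ, ψ) := by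
  rw [evalSeq_mk, evalSeq_mk, evalCtx_cons, evalForm, himp_himp, inf_comm]

end Semantics

/-- Soundness of HLJ with respect to Heyting algebra semantics: if HLJ
derives `Γ₁ ⇒ φ₁ | ⋯ | Γₙ ⇒ φₙ`, then for every Heyting algebra valuation
`v` we have `⊤ ≤ ⨆ᵢ (⟦⋀Γᵢ⟧ᵥ ⇨ ⟦φᵢ⟧ᵥ)`. -/
theorem HLJ_sound {G : Hypersequent} (hG : HLJ G) {H : Type*}
    [HeytingAlgebra H] (v : ℕ → H) : ⊤ ≤ evalHyp v G := by
  induction hG with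
  | id φ => exact (evalSeq_id v φ).ge.trans le_sup_left
  | bot φ => exact (evalSeq_bot_cons v [] φ).ge.trans le_sup_left
  | ew S _ ih => exact ih.trans le_sup_right
  | ec _ ih => rwa [← evalHyp_cons_cons]
  | ee G _ ih => rwa [← evalHyp_swap]
  | iwL φ _ ih => exact top_le_evalHyp_cons_of_le (evalSeq_le_cons v φ _ _) ih
  | icL _ ih => exact top_le_evalHyp_cons_of_le (evalSeq_cons_cons v _ _ _).le ih
  | ieL Γ₁ _ ih => exact top_le_evalHyp_cons_of_le (evalSeq_swap v Γ₁ _ _ _ _).le ih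
  | cut _ _ ih₁ ih₂ =>
    exact top_le_evalHyp_cons_of_inf_le (evalSeq_inf_evalSeq_le_append v _ _ _ _) ih₁ ih₂
  | andL₁ φ₂ _ ih => exact top_le_evalHyp_cons_of_le (evalSeq_le_and_cons_left v _ φ₂ _ _) ih
  | andL₂ φ₁ _ ih => exact top_le_evalHyp_cons_of_le (evalSeq_le_and_cons_right v φ₁ _ _ _) ih
  | andR _ _ ih₁ ih₂ => exact top_le_evalHyp_cons_of_inf_le (evalSeq_and v _ _ _).ge ih₁ ih₂
  | orL _ _ ih₁ ih₂ => exact top_le_evalHyp_cons_of_inf_le (evalSeq_or_cons v _ _ _ _).ge ih₁ ih₂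
  | orR₁ ψ _ ih => exact top_le_evalHyp_cons_of_le (evalSeq_le_or_left v _ _ ψ) ih
  | orR₂ φ _ ih => exact top_le_evalHyp_cons_of_le (evalSeq_le_or_right v _ φ _) ih
  | impL _ _ ih₁ ih₂ =>
    exact top_le_evalHyp_cons_of_inf_le (evalSeq_inf_evalSeq_le_imp_cons v _ _ _ _) ih₁ ih₂
  | impR _ ih => exact top_le_evalHyp_cons_of_le (evalSeq_imp v _ _ _).ge ih
end

section
/- For the hypersequent calculus HLJ extended with the communication rule (com): from Γ, Δ ⇒ Θ | G and Γ', Δ' ⇒ Θ' | G infer Γ, Δ' ⇒ Θ | Γ', Δ ⇒ Θ' | G, the hypersequent ⇒ (φ → ψ) ∨ (ψ → φ) is derivable for all formulas φ, ψ. -/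
/-- The hypersequent calculus HLJ + (com): HLJ extended with Avron's
communication rule. -/
inductive HLJCom : Hypersequent → Prop
  | id (φ : PForm) : HLJCom [([φ], φ)]
  | bot (φ : PForm) : HLJCom [([PForm.bot], φ)]
  | ew (S : Sequent) {G} : HLJCom G → HLJCom (S :: G)
  | ec {S : Sequent} {G} : HLJCom (S :: S :: G) → HLJCom (S :: G)
  | ee {S T : Sequent} (G : Hypersequent) {H} :
      HLJCom (G ++ S :: T :: H) → HLJCom (G ++ T :: S :: H)
  | iwL (φ : PForm) {Γ δ G} : HLJCom ((Γ, δ) :: G) → HLJCom ((φ :: Γ, δ) :: G)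
  | icL {φ : PForm} {Γ δ G} :
      HLJCom ((φ :: φ :: Γ, δ) :: G) → HLJCom ((φ :: Γ, δ) :: G)
  | ieL {φ ψ : PForm} (Γ₁ : List PForm) {Γ₂ δ G} :
      HLJCom ((Γ₁ ++ φ :: ψ :: Γ₂, δ) :: G) →
      HLJCom ((Γ₁ ++ ψ :: φ :: Γ₂, δ) :: G)
  | cut {Γ₀ Γ₁ : List PForm} {δ χ : PForm} {G} :
      HLJCom ((Γ₀, δ) :: G) → HLJCom ((δ :: Γ₁, χ) :: G) →
      HLJCom ((Γ₀ ++ Γ₁, χ) :: G)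
  | andL₁ {φ₁ : PForm} (φ₂ : PForm) {Γ δ G} :
      HLJCom ((φ₁ :: Γ, δ) :: G) → HLJCom ((PForm.and φ₁ φ₂ :: Γ, δ) :: G)
  | andL₂ (φ₁ : PForm) {φ₂ : PForm} {Γ δ G} :
      HLJCom ((φ₂ :: Γ, δ) :: G) → HLJCom ((PForm.and φ₁ φ₂ :: Γ, δ) :: G)
  | andR {Γ} {φ ψ : PForm} {G} :
      HLJCom ((Γ, φ) :: G) → HLJCom ((Γ, ψ) :: G) →
      HLJCom ((Γ, PForm.and φ ψ) :: G)
  | orL {φ ψ : PForm} {Γ δ G} :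
      HLJCom ((φ :: Γ, δ) :: G) → HLJCom ((ψ :: Γ, δ) :: G) →
      HLJCom ((PForm.or φ ψ :: Γ, δ) :: G)
  | orR₁ {Γ} {φ : PForm} (ψ : PForm) {G} :
      HLJCom ((Γ, φ) :: G) → HLJCom ((Γ, PForm.or φ ψ) :: G)
  | orR₂ (φ : PForm) {ψ : PForm} {Γ G} :
      HLJCom ((Γ, ψ) :: G) → HLJCom ((Γ, PForm.or φ ψ) :: G)
  | impL {φ ψ : PForm} {Γ δ G} :
      HLJCom ((Γ, φ) :: G) → HLJCom ((ψ :: Γ, δ) :: G) →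
      HLJCom ((PForm.imp φ ψ :: Γ, δ) :: G)
  | impR {φ ψ : PForm} {Γ G} :
      HLJCom ((φ :: Γ, ψ) :: G) → HLJCom ((Γ, PForm.imp φ ψ) :: G)
  | com {Γ Δ Γ' Δ' : List PForm} {θ θ' : PForm} {G} :
      HLJCom ((Γ ++ Δ, θ) :: G) → HLJCom ((Γ' ++ Δ', θ') :: G) →
      HLJCom ((Γ ++ Δ', θ) :: (Γ' ++ Δ, θ') :: G)

/-! Communication applied to the axioms `φ ⇒ φ` and `ψ ⇒ ψ` swaps their antecedents and yields
`φ ⇒ ψ | ψ ⇒ φ`; →-right and ∨-right in each component, followed by external contraction,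
merge the two components into `⇒ (φ → ψ) ∨ (ψ → φ)`. -/

namespace HLJCom

theorem swap {S T : Sequent} {G : Hypersequent} (h : HLJCom (S :: T :: G)) :
    HLJCom (T :: S :: G) :=
  ee [] h

theorem com_id (φ ψ : PForm) : HLJCom [([φ], ψ), ([ψ], φ)] :=
  com (Γ := []) (Δ := [ψ]) (Γ' := []) (Δ' := [φ]) (id ψ) (id φ)

theorem or_imp_of_split {φ ψ : PForm} {G : Hypersequent}
    (h : HLJCom (([φ], ψ) :: ([ψ], φ) :: G)) :
    HLJCom (([], PForm.or (PForm.imp φ ψ) (PForm.imp ψ φ)) :: G) :=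
  ec (orR₁ _ (impR (swap (orR₂ _ (impR (swap h))))))

end HLJCom

/-- In HLJ + (com), the hypersequent `⇒ (φ → ψ) ∨ (ψ → φ)` is derivable for
all formulas `φ`, `ψ`. -/
theorem HLJCom_proves_linearity (φ ψ : PForm) :
    HLJCom [([], PForm.or (PForm.imp φ ψ) (PForm.imp ψ φ))] :=
  HLJCom.or_imp_of_split (HLJCom.com_id φ ψ)
end

section
/- For the single-conclusion hypersequent calculus HLJ (without the communication rule), derivability has the strong soundness (component) property: if HLJ derives the hypersequent S₁ | ⋯ | Sₙ, then some individual component Sᵢ is derivable in the ordinary sequent calculus LJ (i.e., HLJ derivations can be projected to a single-component derivation). -/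
/-- The ordinary single-conclusion intuitionistic sequent calculus LJ
(the one-component restriction of HLJ). -/
inductive LJ : List PForm → PForm → Prop
  | id (φ : PForm) : LJ [φ] φ
  | bot (φ : PForm) : LJ [PForm.bot] φ
  | iwL (φ : PForm) {Γ δ} : LJ Γ δ → LJ (φ :: Γ) δ
  | icL {φ : PForm} {Γ δ} : LJ (φ :: φ :: Γ) δ → LJ (φ :: Γ) δ
  | ieL {φ ψ : PForm} (Γ₁ : List PForm) {Γ₂ δ} :
      LJ (Γ₁ ++ φ :: ψ :: Γ₂) δ → LJ (Γ₁ ++ ψ :: φ :: Γ₂) δ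
  | cut {Γ₀ Γ₁ : List PForm} {δ χ : PForm} :
      LJ Γ₀ δ → LJ (δ :: Γ₁) χ → LJ (Γ₀ ++ Γ₁) χ
  | andL₁ {φ₁ : PForm} (φ₂ : PForm) {Γ δ} :
      LJ (φ₁ :: Γ) δ → LJ (PForm.and φ₁ φ₂ :: Γ) δ
  | andL₂ (φ₁ : PForm) {φ₂ : PForm} {Γ δ} :
      LJ (φ₂ :: Γ) δ → LJ (PForm.and φ₁ φ₂ :: Γ) δ
  | andR {Γ} {φ ψ : PForm} : LJ Γ φ → LJ Γ ψ → LJ Γ (PForm.and φ ψ)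
  | orL {φ ψ : PForm} {Γ δ} :
      LJ (φ :: Γ) δ → LJ (ψ :: Γ) δ → LJ (PForm.or φ ψ :: Γ) δ
  | orR₁ {Γ} {φ : PForm} (ψ : PForm) : LJ Γ φ → LJ Γ (PForm.or φ ψ)
  | orR₂ (φ : PForm) {ψ : PForm} {Γ} : LJ Γ ψ → LJ Γ (PForm.or φ ψ)
  | impL {φ ψ : PForm} {Γ δ} :
      LJ Γ φ → LJ (ψ :: Γ) δ → LJ (PForm.imp φ ψ :: Γ) δ
  | impR {φ ψ : PForm} {Γ} : LJ (φ :: Γ) ψ → LJ Γ (PForm.imp φ ψ)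

/-- Strong soundness (component projection) for HLJ: any HLJ-derivable
hypersequent has a component derivable in the ordinary sequent calculus LJ. -/
theorem HLJ_strong_soundness {G : Hypersequent} (hG : HLJ G) :
    ∃ S ∈ G, LJ S.1 S.2 := by
  induction hG with
  | id φ => exact ⟨([φ], φ), by simp, LJ.id φ⟩
  | bot φ => exact ⟨([PForm.bot], φ), by simp, LJ.bot φ⟩
  | ew S h ih => obtain ⟨X, hX, hL⟩ := ih; exact ⟨X, List.mem_cons_of_mem _ hX, hL⟩
  | ec h ih =>
      obtain ⟨X, hX, hL⟩ := ih
      rcases List.mem_cons.mp hX with h1 | hX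
      · subst h1; exact ⟨X, List.mem_cons_self, hL⟩
      · exact ⟨X, hX, hL⟩
  | ee G h ih =>
      obtain ⟨X, hX, hL⟩ := ih
      refine ⟨X, ?_, hL⟩
      simp only [List.mem_append, List.mem_cons] at hX ⊢
      tauto
  | iwL φ h ih =>
      obtain ⟨X, hX, hL⟩ := ih
      rcases List.mem_cons.mp hX with h1 | hX
      · subst h1; exact ⟨_, List.mem_cons_self, LJ.iwL φ hL⟩
      · exact ⟨X, List.mem_cons_of_mem _ hX, hL⟩
  | icL h ih =>
      obtain ⟨X, hX, hL⟩ := ih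
      rcases List.mem_cons.mp hX with h1 | hX
      · subst h1; exact ⟨_, List.mem_cons_self, LJ.icL hL⟩
      · exact ⟨X, List.mem_cons_of_mem _ hX, hL⟩
  | ieL Γ₁ h ih =>
      obtain ⟨X, hX, hL⟩ := ih
      rcases List.mem_cons.mp hX with h1 | hX
      · subst h1; exact ⟨_, List.mem_cons_self, LJ.ieL Γ₁ hL⟩
      · exact ⟨X, List.mem_cons_of_mem _ hX, hL⟩
  | cut h1 h2 ih1 ih2 =>
      obtain ⟨X, hX, hL⟩ := ih1
      rcases List.mem_cons.mp hX with e1 | hX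
      · obtain ⟨Y, hY, hM⟩ := ih2
        rcases List.mem_cons.mp hY with e2 | hY
        · subst e1; subst e2
          exact ⟨_, List.mem_cons_self, LJ.cut hL hM⟩
        · exact ⟨Y, List.mem_cons_of_mem _ hY, hM⟩
      · exact ⟨X, List.mem_cons_of_mem _ hX, hL⟩
  | andL₁ φ₂ h ih =>
      obtain ⟨X, hX, hL⟩ := ih
      rcases List.mem_cons.mp hX with h1 | hX
      · subst h1; exact ⟨_, List.mem_cons_self, LJ.andL₁ φ₂ hL⟩
      · exact ⟨X, List.mem_cons_of_mem _ hX, hL⟩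
  | andL₂ φ₁ h ih =>
      obtain ⟨X, hX, hL⟩ := ih
      rcases List.mem_cons.mp hX with h1 | hX
      · subst h1; exact ⟨_, List.mem_cons_self, LJ.andL₂ φ₁ hL⟩
      · exact ⟨X, List.mem_cons_of_mem _ hX, hL⟩
  | andR h1 h2 ih1 ih2 =>
      obtain ⟨X, hX, hL⟩ := ih1
      rcases List.mem_cons.mp hX with e1 | hX
      · obtain ⟨Y, hY, hM⟩ := ih2
        rcases List.mem_cons.mp hY with e2 | hY
        · subst e1; subst e2
          exact ⟨_, List.mem_cons_self, LJ.andR hL hM⟩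
        · exact ⟨Y, List.mem_cons_of_mem _ hY, hM⟩
      · exact ⟨X, List.mem_cons_of_mem _ hX, hL⟩
  | orL h1 h2 ih1 ih2 =>
      obtain ⟨X, hX, hL⟩ := ih1
      rcases List.mem_cons.mp hX with e1 | hX
      · obtain ⟨Y, hY, hM⟩ := ih2
        rcases List.mem_cons.mp hY with e2 | hY
        · subst e1; subst e2
          exact ⟨_, List.mem_cons_self, LJ.orL hL hM⟩
        · exact ⟨Y, List.mem_cons_of_mem _ hY, hM⟩
      · exact ⟨X, List.mem_cons_of_mem _ hX, hL⟩
  | orR₁ ψ h ih =>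
      obtain ⟨X, hX, hL⟩ := ih
      rcases List.mem_cons.mp hX with h1 | hX
      · subst h1; exact ⟨_, List.mem_cons_self, LJ.orR₁ ψ hL⟩
      · exact ⟨X, List.mem_cons_of_mem _ hX, hL⟩
  | orR₂ φ h ih =>
      obtain ⟨X, hX, hL⟩ := ih
      rcases List.mem_cons.mp hX with h1 | hX
      · subst h1; exact ⟨_, List.mem_cons_self, LJ.orR₂ φ hL⟩
      · exact ⟨X, List.mem_cons_of_mem _ hX, hL⟩
  | impL h1 h2 ih1 ih2 =>
      obtain ⟨X, hX, hL⟩ := ih1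
      rcases List.mem_cons.mp hX with e1 | hX
      · obtain ⟨Y, hY, hM⟩ := ih2
        rcases List.mem_cons.mp hY with e2 | hY
        · subst e1; subst e2
          exact ⟨_, List.mem_cons_self, LJ.impL hL hM⟩
        · exact ⟨Y, List.mem_cons_of_mem _ hY, hM⟩
      · exact ⟨X, List.mem_cons_of_mem _ hX, hL⟩
  | impR h ih =>
      obtain ⟨X, hX, hL⟩ := ih
      rcases List.mem_cons.mp hX with h1 | hX
      · subst h1; exact ⟨_, List.mem_cons_self, LJ.impR hL⟩
      · exact ⟨X, List.mem_cons_of_mem _ hX, hL⟩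
end
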